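/- Let A, B be n×n Hermitian matrices with A - zB a regular pencil. Then n₊(A,B) ≥ n₋(A) + n₋(B) − n, where n₊(A,B) is the number of positive real eigenvalues of the pencil counted with algebraic multiplicity. -/

import Mathlib

/-!
Let `ν t` be the number of negative eigenvalues of the Hermitian matrix `A - t • B`. Then
`ν 0 = n₋(A)`, and for large `T` the form of `A - T • B` is positive definite on the negative
eigenspace of `B`, so `ν T ≤ n - n₋(B)`. Inertia is lower semicontinuous, because a subspace on
which a Hermitian form is definite stays so under small perturbations; with `n₋ + n₊ + n₀ = n`
this gives `ν t₀ ≤ ν t ≤ ν t₀ + dim ker (A - t₀ • B)` for `t` near `t₀`. So `ν` drops only at real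
eigenvalues `t₀` of the pencil, by at most `dim ker (A - t₀ • B)`, which is at most the multiplicity
of `t₀` as a root of `det (A - z • B)`. Summing the drops over `(0, T]` gives
`n₋(A) - (n - n₋(B)) ≤ n₊(A, B)`.
-/

open Polynomial Matrix
open scoped ComplexOrder

noncomputable def pencil {n : ℕ} (A B : Matrix (Fin n) (Fin n) ℂ) : Polynomial ℂ :=
  (A.map (fun a => Polynomial.C a) - (Polynomial.X : Polynomial ℂ) • B.map (fun a => Polynomial.C a)).det

noncomputable def nPos {n : ℕ} {A : Matrix (Fin n) (Fin n) ℂ} (hA : A.IsHermitian) : ℕ :=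
  (Finset.univ.filter fun i => 0 < hA.eigenvalues i).card

noncomputable def nZero {n : ℕ} {A : Matrix (Fin n) (Fin n) ℂ} (hA : A.IsHermitian) : ℕ :=
  (Finset.univ.filter fun i => hA.eigenvalues i = 0).card

noncomputable def nNeg {n : ℕ} {A : Matrix (Fin n) (Fin n) ℂ} (hA : A.IsHermitian) : ℕ :=
  (Finset.univ.filter fun i => hA.eigenvalues i < 0).card

noncomputable def pencilPosCount {n : ℕ} (A B : Matrix (Fin n) (Fin n) ℂ) : ℕ :=
  ((pencil A B).roots.filter fun z => z.im = 0 ∧ 0 < z.re).card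

noncomputable def pencilNegCount {n : ℕ} (A B : Matrix (Fin n) (Fin n) ℂ) : ℕ :=
  ((pencil A B).roots.filter fun z => z.im = 0 ∧ z.re < 0).card

noncomputable def pencilRealCount {n : ℕ} (A B : Matrix (Fin n) (Fin n) ℂ) : ℕ :=
  ((pencil A B).roots.filter fun z => z.im = 0).card

noncomputable def pencilComplexCount {n : ℕ} (A B : Matrix (Fin n) (Fin n) ℂ) : ℕ :=
  ((pencil A B).roots.filter fun z => z.im ≠ 0).card

open Filter Topology
open scoped InnerProductSpace

section Jumps

open Set

theorem le_of_eventually_nhdsLE_of_eventually_nhdsGT {β : Type*} [Preorder β] {f : ℝ → β}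
    {a b : ℝ} (hab : a ≤ b) (hleft : ∀ t ∈ Ioc a b, ∀ᶠ u in 𝓝[≤] t, f u ≤ f t)
    (hright : ∀ t ∈ Ico a b, ∀ᶠ u in 𝓝[>] t, f t ≤ f u) : f a ≤ f b := by
  set S := {u ∈ Icc a b | f a ≤ f u}
  have haS : a ∈ S := ⟨⟨le_rfl, hab⟩, le_rfl⟩
  have hbdd : BddAbove S := ⟨b, fun u hu => hu.1.2⟩
  set c := sSup S
  have hac : a ≤ c := le_csSup hbdd haS
  have hcb : c ≤ b := csSup_le ⟨a, haS⟩ fun u hu => hu.1.2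
  have hfc : f a ≤ f c := by
    rcases hac.eq_or_lt with hac | hac
    · exact hac ▸ le_rfl
    obtain ⟨u, huS, hu⟩ := ((isLUB_csSup ⟨a, haS⟩ hbdd).frequently_mem ⟨a, haS⟩).and_eventually
      (hleft c ⟨hac, hcb⟩) |>.exists
    exact huS.2.trans hu
  rcases hcb.eq_or_lt with hcb | hcb
  · exact hcb ▸ hfc
  obtain ⟨u, hcu, hu, hub⟩ := ((hright c ⟨hac, hcb⟩).and (Ioo_mem_nhdsGT hcb)).exists
  have : u ≤ c := le_csSup hbdd ⟨⟨hac.trans hu.le, hub.le⟩, hfc.trans hcu⟩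
  exact absurd hu this.not_gt

theorem le_add_sum_of_eventually {ν ζ : ℝ → ℕ} (S : Finset ℝ) (hζ : ∀ t ∉ S, ζ t = 0)
    (hν : ∀ t, ∀ᶠ u in 𝓝 t, ν t ≤ ν u ∧ ν u ≤ ν t + ζ t) {a b : ℝ} (hab : a ≤ b) :
    ν a ≤ ν b + ∑ s ∈ S with s ∈ Ioc a b, ζ s := by
  classical
  -- `ν u + F u` is nondecreasing: wherever `ν` drops, by at most `ζ t`, `F` gains `ζ t`.
  let F u := ∑ s ∈ S with s ∈ Ioc a u, ζ s
  have hsub : ∀ u v, u ≤ v → S.filter (· ∈ Ioc a u) ⊆ S.filter (· ∈ Ioc a v) :=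
    fun u v huv s hs => by
      simp only [Finset.mem_filter, mem_Ioc] at hs ⊢
      exact ⟨hs.1, hs.2.1, hs.2.2.trans huv⟩
  have hmono : Monotone F := fun u v huv => Finset.sum_le_sum_of_subset (hsub u v huv)
  have hjump : ∀ u t, a < t → u < t → ζ t + F u ≤ F t := by
    intro u t hat hut
    by_cases ht : t ∈ S
    · have hnot : t ∉ S.filter (· ∈ Ioc a u) := fun h => (Finset.mem_filter.1 h).2.2.not_gt hut
      rw [← Finset.sum_insert hnot]
      refine Finset.sum_le_sum_of_subset fun s hs => ?_
      rcases Finset.mem_insert.1 hs with rfl | hs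
      · exact Finset.mem_filter.2 ⟨ht, hat, le_rfl⟩
      · exact hsub u t hut.le hs
    · rw [hζ t ht, zero_add]
      exact hmono hut.le
  have hFa : F a = 0 := Finset.sum_eq_zero fun s hs => absurd (Finset.mem_filter.1 hs).2 (by simp)
  have key := le_of_eventually_nhdsLE_of_eventually_nhdsGT (f := fun u => ν u + F u) hab
    (fun t ht => ?_) (fun t _ => ?_)
  · rwa [hFa, add_zero] at key
  · filter_upwards [nhdsWithin_le_nhds (hν t), self_mem_nhdsWithin] with u hu hut
    rcases (show u ≤ t from hut).eq_or_lt with rfl | hut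
    · exact le_rfl
    · have := hjump u t ht.1 hut
      omega
  · filter_upwards [nhdsWithin_le_nhds (hν t), self_mem_nhdsWithin] with u hu htu
    exact add_le_add hu.1 (hmono (le_of_lt htu))

end Jumps

theorem Multiset.sum_count_le_card_filter {α : Type*} [DecidableEq α] (m : Multiset α)
    {p : α → Prop} [DecidablePred p] {F : Finset α} (hF : ∀ a ∈ F, p a) :
    ∑ a ∈ F, m.count a ≤ (m.filter p).card :=
  calc ∑ a ∈ F, m.count a = ∑ a ∈ F, (m.filter p).count a :=
        Finset.sum_congr rfl fun a ha => (Multiset.count_filter_of_pos (hF a ha)).symm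
    _ ≤ ∑ a ∈ (m.filter p).toFinset, (m.filter p).count a :=
        Finset.sum_le_sum_of_ne_zero fun _ _ ha =>
          Multiset.mem_toFinset.2 (Multiset.count_ne_zero.1 ha)
    _ = (m.filter p).card := Multiset.toFinset_sum_count_eq _

section DiagonalForm

variable {𝕜 E ι ι' : Type*} [RCLike 𝕜] [NormedAddCommGroup E] [InnerProductSpace 𝕜 E]
  [Fintype ι] [Fintype ι']

theorem finrank_le_card_neg_of_forall_neg {q : E → ℝ} (b : OrthonormalBasis ι 𝕜 E)
    {μ : ι → ℝ} (hq : ∀ x, q x = ∑ i, μ i * ‖⟪b i, x⟫_𝕜‖ ^ 2) (W : Submodule 𝕜 E)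
    (hW : ∀ x ∈ W, x ≠ 0 → q x < 0) :
    Module.finrank 𝕜 W ≤ (Finset.univ.filter fun i => μ i < 0).card := by
  classical
  let S := Finset.univ.filter fun i => μ i < 0
  let f : W →ₗ[𝕜] (S → 𝕜) := (LinearMap.pi fun i : S => innerₛₗ 𝕜 (b i)).comp W.subtype
  have hf : Function.Injective f := by
    rw [← LinearMap.ker_eq_bot, LinearMap.ker_eq_bot']
    intro x hx
    by_contra hx0
    have hnonneg : 0 ≤ q x := by
      rw [hq]
      refine Finset.sum_nonneg fun i _ => ?_
      by_cases hi : μ i < 0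
      · have : ⟪b i, (x : E)⟫_𝕜 = 0 := congr_fun hx ⟨i, by simpa [S] using hi⟩
        simp [this]
      · exact mul_nonneg (not_lt.1 hi) (sq_nonneg _)
    exact (hW x x.2 (by simpa using hx0)).not_ge hnonneg
  simpa using LinearMap.finrank_le_finrank_of_injective hf

theorem card_neg_le_card_neg_of_le_add {q q' : E → ℝ} (b : OrthonormalBasis ι 𝕜 E)
    (b' : OrthonormalBasis ι' 𝕜 E) {μ : ι → ℝ} {μ' : ι' → ℝ}
    (hq : ∀ x, q x = ∑ i, μ i * ‖⟪b i, x⟫_𝕜‖ ^ 2)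
    (hq' : ∀ x, q' x = ∑ i, μ' i * ‖⟪b' i, x⟫_𝕜‖ ^ 2)
    {ε : ℝ} (hle : ∀ x, q' x ≤ q x + ε * ‖x‖ ^ 2) (hε : ∀ i, μ i < 0 → μ i + ε < 0) :
    (Finset.univ.filter fun i => μ i < 0).card ≤ (Finset.univ.filter fun i => μ' i < 0).card := by
  classical
  -- `q'` is negative definite on the common kernel of the coordinates `⟪b i, ·⟫` with `0 ≤ μ i`.
  let N := Finset.univ.filter fun i => ¬ μ i < 0
  let g : E →ₗ[𝕜] (N → 𝕜) := LinearMap.pi fun i : N => innerₛₗ 𝕜 (b i)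
  have hker : ∀ x ∈ LinearMap.ker g, ∀ i, ¬ μ i < 0 → ⟪b i, x⟫_𝕜 = 0 := fun x hx i hi =>
    congr_fun (LinearMap.mem_ker.1 hx) ⟨i, by simpa [N] using hi⟩
  have hcard : (Finset.univ.filter fun i => μ i < 0).card ≤
      Module.finrank 𝕜 (LinearMap.ker g) := by
    have : FiniteDimensional 𝕜 E := b.toBasis.finiteDimensional_of_finite
    have hrange : Module.finrank 𝕜 (LinearMap.range g) ≤ N.card := by
      simpa using Submodule.finrank_le (LinearMap.range g)
    have hnullity := LinearMap.finrank_range_add_finrank_ker g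
    have hE : Module.finrank 𝕜 E = Fintype.card ι := Module.finrank_eq_card_basis b.toBasis
    have hsplit : (Finset.univ.filter fun i => μ i < 0).card + N.card = Fintype.card ι :=
      Finset.card_filter_add_card_filter_not _
    omega
  refine hcard.trans (finrank_le_card_neg_of_forall_neg b' hq' _ fun x hx hx0 => ?_)
  have hsum : q x + ε * ‖x‖ ^ 2 = ∑ i, (μ i + ε) * ‖⟪b i, x⟫_𝕜‖ ^ 2 := by
    rw [hq, ← b.sum_sq_norm_inner_right x, Finset.mul_sum, ← Finset.sum_add_distrib]
    simp only [add_mul]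
  obtain ⟨j, hj⟩ : ∃ j, ⟪b j, x⟫_𝕜 ≠ 0 := by
    by_contra! h
    exact hx0 (by rw [← b.sum_repr' x]; simp [h])
  have hj' : μ j < 0 := by_contra fun h => hj (hker x hx j h)
  refine (hle x).trans_lt (hsum ▸ ?_)
  refine (Finset.sum_lt_sum (g := fun _ => (0 : ℝ)) (fun i _ => ?_)
    ⟨j, Finset.mem_univ _, ?_⟩).trans_eq (by simp)
  · by_cases hi : μ i < 0
    · exact mul_nonpos_of_nonpos_of_nonneg (hε i hi).le (sq_nonneg _)
    · simp [hker x hx i hi]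
  · exact mul_neg_of_neg_of_pos (hε j hj') (by positivity)

end DiagonalForm

section KernelDivisibility

variable {K ι : Type*} [Field K] [Fintype ι]

theorem Submodule.exists_pi_basis_finset_mem (V : Submodule K (ι → K)) :
    ∃ (b : Module.Basis ι K (ι → K)) (s : Finset ι),
      s.card = Module.finrank K V ∧ ∀ j ∈ s, b j ∈ V := by
  obtain ⟨W, hVW⟩ := Submodule.exists_isCompl V
  have hcard : Fintype.card (Fin (Module.finrank K V) ⊕ Fin (Module.finrank K W)) =
      Fintype.card ι := by
    simpa using Submodule.finrank_add_eq_of_isCompl hVW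
  let e := Fintype.equivOfCardEq hcard
  refine ⟨(((Module.finBasis K V).prod (Module.finBasis K W)).map
      (Submodule.prodEquivOfIsCompl V W hVW)).reindex e,
    Finset.univ.map (Function.Embedding.inl.trans e.toEmbedding), by simp, fun j hj => ?_⟩
  obtain ⟨i, -, rfl⟩ := Finset.mem_map.1 hj
  simp

theorem pow_finrank_ker_dvd_det [DecidableEq ι] (M N : Matrix ι ι K) (y : K[X]) :
    y ^ Module.finrank K (LinearMap.ker M.mulVecLin) ∣ (M.map C - y • N.map C).det := by
  obtain ⟨b, s, hs, hb⟩ := (LinearMap.ker M.mulVecLin).exists_pi_basis_finset_mem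
  let P := (Pi.basisFun K ι).toMatrix b
  have hP : IsUnit P.det := by
    rw [← Module.Basis.det_apply]
    exact (Pi.basisFun K ι).isUnit_det b
  have hMP : ∀ i, ∀ j ∈ s, (M * P) i j = 0 := fun i j hj => by
    simpa [Matrix.mul_apply, mulVec, dotProduct, P, Module.Basis.toMatrix_apply] using
      congr_fun (LinearMap.mem_ker.1 (hb j hj)) i
  -- The columns of `(M - y • N) * P` indexed by `s` are those of `-y • (N * P)`.
  let Q : Matrix ι ι K[X] := Matrix.of fun i j =>
    if j ∈ s then -C ((N * P) i j) else C ((M * P) i j) - y * C ((N * P) i j)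
  have hfact : (M.map C - y • N.map C) * P.map C =
      Q * diagonal fun j => if j ∈ s then y else 1 := by
    rw [sub_mul, smul_mul, ← Matrix.map_mul, ← Matrix.map_mul]
    refine Matrix.ext fun i j => ?_
    rw [mul_diagonal]
    by_cases hj : j ∈ s
    · simp only [Q, Matrix.sub_apply, Matrix.smul_apply, Matrix.map_apply, of_apply, if_pos hj,
        hMP i j hj, map_zero, smul_eq_mul]
      ring
    · simp only [Q, Matrix.sub_apply, Matrix.smul_apply, Matrix.map_apply, of_apply, if_neg hj,
        smul_eq_mul, mul_one]
  have hdet : (M.map C - y • N.map C).det * C P.det = Q.det * y ^ s.card := by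
    rw [RingHom.map_det, RingHom.mapMatrix_apply, ← det_mul, hfact, det_mul, det_diagonal,
      Finset.prod_ite_mem, Finset.univ_inter, Finset.prod_const]
  rw [← hs, ← (isUnit_C.2 hP).dvd_mul_right, hdet]
  exact dvd_mul_left _ _

end KernelDivisibility

section HermitianMatrix

variable {n : ℕ} {H K : Matrix (Fin n) (Fin n) ℂ}

noncomputable def quadForm (H : Matrix (Fin n) (Fin n) ℂ) (x : EuclideanSpace ℂ (Fin n)) : ℝ :=
  RCLike.re ⟪toEuclideanLin H x, x⟫_ℂ

theorem Matrix.IsHermitian.toEuclideanLin_eigenvectorBasis (hH : H.IsHermitian) (i : Fin n) :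
    toEuclideanLin H (hH.eigenvectorBasis i) = (hH.eigenvalues i : ℂ) • hH.eigenvectorBasis i := by
  rw [toLpLin_apply, hH.mulVec_eigenvectorBasis, RCLike.real_smul_eq_coe_smul (K := ℂ)]
  rfl

theorem Matrix.IsHermitian.quadForm_eq_sum (hH : H.IsHermitian) (x : EuclideanSpace ℂ (Fin n)) :
    quadForm H x = ∑ i, hH.eigenvalues i * ‖⟪hH.eigenvectorBasis i, x⟫_ℂ‖ ^ 2 := by
  rw [quadForm, ← hH.eigenvectorBasis.sum_inner_mul_inner, map_sum]
  refine Finset.sum_congr rfl fun i _ => ?_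
  rw [isSymmetric_toEuclideanLin_iff.mpr hH, hH.toEuclideanLin_eigenvectorBasis, inner_smul_right,
    mul_assoc, ← inner_conj_symm, RCLike.conj_mul]
  simp [← Complex.ofReal_pow]

theorem quadForm_sub_smul (A B : Matrix (Fin n) (Fin n) ℂ) (t : ℝ) (x : EuclideanSpace ℂ (Fin n)) :
    quadForm (A - (t : ℂ) • B) x = quadForm A x - t * quadForm B x := by
  simp only [quadForm, map_sub, map_smul, LinearMap.sub_apply, LinearMap.smul_apply,
    inner_sub_left, inner_smul_left]
  simp

theorem exists_abs_quadForm_le (H : Matrix (Fin n) (Fin n) ℂ) :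
    ∃ C, ∀ x, |quadForm H x| ≤ C * ‖x‖ ^ 2 := by
  refine ⟨‖toEuclideanCLM (n := Fin n) (𝕜 := ℂ) H‖, fun x => ?_⟩
  calc |quadForm H x| ≤ ‖toEuclideanCLM (n := Fin n) (𝕜 := ℂ) H x‖ * ‖x‖ :=
        (RCLike.abs_re_le_norm _).trans (norm_inner_le_norm _ _)
    _ ≤ _ := by
      rw [sq, ← mul_assoc]
      exact mul_le_mul_of_nonneg_right (ContinuousLinearMap.le_opNorm _ _) (norm_nonneg _)

theorem nNeg_add_nPos_add_nZero (hH : H.IsHermitian) : nNeg hH + nPos hH + nZero hH = n := by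
  simp only [nNeg, nPos, nZero, Finset.card_filter, ← Finset.sum_add_distrib]
  calc _ = ∑ _ : Fin n, 1 := Finset.sum_congr rfl fun i _ => by
          rcases lt_trichotomy (hH.eigenvalues i) 0 with h | h | h
          · simp [h, h.ne, h.not_gt]
          · simp [h]
          · simp [h, h.ne', h.not_gt]
    _ = n := by simp

theorem nZero_eq_finrank_ker (hH : H.IsHermitian) :
    nZero hH = Module.finrank ℂ (LinearMap.ker H.mulVecLin) := by
  have hrank := hH.rank_eq_card_non_zero_eigs
  rw [Fintype.card_subtype, Matrix.rank] at hrank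
  have hnullity := LinearMap.finrank_range_add_finrank_ker H.mulVecLin
  rw [Module.finrank_fin_fun] at hnullity
  have hsplit : (Finset.univ.filter fun i => hH.eigenvalues i ≠ 0).card + nZero hH = n := by
    simpa [nZero] using Finset.card_filter_add_card_filter_not (s := Finset.univ)
      fun i => hH.eigenvalues i ≠ 0
  omega

theorem nNeg_le_nNeg_of_quadForm_le (hH : H.IsHermitian) (hK : K.IsHermitian) {ε : ℝ}
    (hle : ∀ x, quadForm K x ≤ quadForm H x + ε * ‖x‖ ^ 2)
    (hε : ∀ i, hH.eigenvalues i < 0 → hH.eigenvalues i + ε < 0) : nNeg hH ≤ nNeg hK :=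
  card_neg_le_card_neg_of_le_add _ _ hH.quadForm_eq_sum hK.quadForm_eq_sum hle hε

theorem nPos_le_nPos_of_le_quadForm (hH : H.IsHermitian) (hK : K.IsHermitian) {ε : ℝ}
    (hle : ∀ x, quadForm H x - ε * ‖x‖ ^ 2 ≤ quadForm K x)
    (hε : ∀ i, 0 < hH.eigenvalues i → ε < hH.eigenvalues i) : nPos hH ≤ nPos hK := by
  have key := card_neg_le_card_neg_of_le_add (q := fun x => -quadForm H x)
    (q' := fun x => -quadForm K x) (μ := fun i => -hH.eigenvalues i)
    (μ' := fun i => -hK.eigenvalues i) hH.eigenvectorBasis hK.eigenvectorBasis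
    (fun x => by simp [hH.quadForm_eq_sum]) (fun x => by simp [hK.quadForm_eq_sum])
    (fun x => by linarith [hle x]) (fun i hi => by linarith [hε i (neg_neg_iff_pos.1 hi)])
  simp only [neg_neg_iff_pos] at key
  exact key

end HermitianMatrix

section Pencil

variable {n : ℕ} {A B : Matrix (Fin n) (Fin n) ℂ}

theorem Matrix.IsHermitian.sub_ofReal_smul (hA : A.IsHermitian) (hB : B.IsHermitian) (t : ℝ) :
    (A - (t : ℂ) • B).IsHermitian :=
  hA.sub (hB.smul (Complex.conj_ofReal t))

theorem eventually_nNeg_le_and_nPos_le (hA : A.IsHermitian) (hB : B.IsHermitian) (t₀ : ℝ) :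
    ∀ᶠ t in 𝓝 t₀, nNeg (hA.sub_ofReal_smul hB t₀) ≤ nNeg (hA.sub_ofReal_smul hB t) ∧
      nPos (hA.sub_ofReal_smul hB t₀) ≤ nPos (hA.sub_ofReal_smul hB t) := by
  obtain ⟨C, hC⟩ := exists_abs_quadForm_le B
  set ev := (hA.sub_ofReal_smul hB t₀).eigenvalues
  have hsmall : ∀ᶠ t in 𝓝 t₀, ∀ i, ev i ≠ 0 → |t - t₀| * C < |ev i| := by
    refine eventually_all.2 fun i => ?_
    by_cases hi : ev i = 0
    · exact Eventually.of_forall fun _ h => absurd hi h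
    have hcont : ContinuousAt (fun t => |t - t₀| * C) t₀ := by fun_prop
    have h₀ : (fun t => |t - t₀| * C) t₀ < |ev i| := by simpa using hi
    filter_upwards [hcont.eventually_lt continuousAt_const h₀] with t ht _
    exact ht
  filter_upwards [hsmall] with t ht
  have hdiff : ∀ x, |quadForm (A - (t : ℂ) • B) x - quadForm (A - (t₀ : ℂ) • B) x| ≤
      |t - t₀| * C * ‖x‖ ^ 2 := by
    intro x
    rw [quadForm_sub_smul, quadForm_sub_smul, mul_assoc]
    calc _ = |t - t₀| * |quadForm B x| := by rw [← abs_mul, ← abs_neg]; congr 1; ring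
      _ ≤ _ := mul_le_mul_of_nonneg_left (hC x) (abs_nonneg _)
  constructor
  · refine nNeg_le_nNeg_of_quadForm_le (ε := |t - t₀| * C) _ _
      (fun x => by linarith [(abs_le.1 (hdiff x)).2]) fun i hi => ?_
    have := ht i hi.ne
    rw [abs_of_neg hi] at this
    linarith
  · refine nPos_le_nPos_of_le_quadForm (ε := |t - t₀| * C) _ _
      (fun x => by linarith [(abs_le.1 (hdiff x)).1]) fun i hi => ?_
    have := ht i hi.ne'
    rwa [abs_of_pos hi] at this

theorem eventually_nNeg_le_nNeg_add_nZero (hA : A.IsHermitian) (hB : B.IsHermitian) (t₀ : ℝ) :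
    ∀ᶠ t in 𝓝 t₀, nNeg (hA.sub_ofReal_smul hB t₀) ≤ nNeg (hA.sub_ofReal_smul hB t) ∧
      nNeg (hA.sub_ofReal_smul hB t) ≤
        nNeg (hA.sub_ofReal_smul hB t₀) + nZero (hA.sub_ofReal_smul hB t₀) := by
  filter_upwards [eventually_nNeg_le_and_nPos_le hA hB t₀] with t ht
  have h₀ := nNeg_add_nPos_add_nZero (hA.sub_ofReal_smul hB t₀)
  have h := nNeg_add_nPos_add_nZero (hA.sub_ofReal_smul hB t)
  omega

theorem eventually_nNeg_le_nPos (hA : A.IsHermitian) (hB : B.IsHermitian) :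
    ∀ᶠ T in atTop, nNeg hB ≤ nPos (hA.sub_ofReal_smul hB T) := by
  obtain ⟨C, hC⟩ := exists_abs_quadForm_le A
  have hlarge : ∀ᶠ T in atTop, ∀ i, hB.eigenvalues i < 0 → T * hB.eigenvalues i + C < 0 := by
    refine eventually_all.2 fun i => ?_
    filter_upwards [eventually_gt_atTop (C / -hB.eigenvalues i)] with T hT hi
    rw [div_lt_iff₀ (neg_pos.2 hi)] at hT
    linarith
  filter_upwards [hlarge, eventually_gt_atTop 0] with T hT hT0
  have key := card_neg_le_card_neg_of_le_add (q := fun x => T * quadForm B x)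
    (q' := fun x => -quadForm (A - (T : ℂ) • B) x) (μ := fun i => T * hB.eigenvalues i)
    (μ' := fun i => -(hA.sub_ofReal_smul hB T).eigenvalues i) hB.eigenvectorBasis
    (hA.sub_ofReal_smul hB T).eigenvectorBasis
    (fun x => by simp [hB.quadForm_eq_sum, Finset.mul_sum, mul_assoc])
    (fun x => by rw [(hA.sub_ofReal_smul hB T).quadForm_eq_sum]; simp)
    (fun x => by rw [quadForm_sub_smul]; linarith [(abs_le.1 (hC x)).1])
    fun i hi => hT i (neg_of_mul_neg_right hi hT0.le)
  simp only [neg_neg_iff_pos, mul_neg_iff, hT0, not_lt_of_gt hT0, true_and, false_and, or_false]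
    at key
  exact key

theorem pencil_eq_det_sub_smul (A B : Matrix (Fin n) (Fin n) ℂ) (z : ℂ) :
    pencil A B = ((A - z • B).map C - (X - C z) • B.map C).det := by
  rw [pencil]
  congr 1
  ext1 i j
  simp only [Matrix.sub_apply, Matrix.smul_apply, Matrix.map_apply, smul_eq_mul, map_sub, map_mul]
  ring

theorem nZero_le_rootMultiplicity (hA : A.IsHermitian) (hB : B.IsHermitian)
    (hreg : pencil A B ≠ 0) (t : ℝ) :
    nZero (hA.sub_ofReal_smul hB t) ≤ (pencil A B).rootMultiplicity (t : ℂ) := by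
  rw [nZero_eq_finrank_ker, le_rootMultiplicity_iff hreg, pencil_eq_det_sub_smul A B t]
  exact pow_finrank_ker_dvd_det _ _ _

theorem sum_rootMultiplicity_le_pencilPosCount (A B : Matrix (Fin n) (Fin n) ℂ) (F : Finset ℝ)
    (hF : ∀ s ∈ F, 0 < s) :
    ∑ s ∈ F, (pencil A B).rootMultiplicity (s : ℂ) ≤ pencilPosCount A B := by
  classical
  simp_rw [← count_roots]
  rw [← Finset.sum_image (f := fun z => (pencil A B).roots.count z)
    fun x _ y _ h => Complex.ofReal_injective h]
  exact Multiset.sum_count_le_card_filter _ (by simpa using hF)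

end Pencil

theorem stmt4 {n : ℕ} (A B : Matrix (Fin n) (Fin n) ℂ)
    (hA : A.IsHermitian) (hB : B.IsHermitian) (hreg : pencil A B ≠ 0) :
    nNeg hA + nNeg hB ≤ pencilPosCount A B + n := by
  classical
  let S := (pencil A B).roots.toFinset.preimage ((↑) : ℝ → ℂ) Complex.ofReal_injective.injOn
  have hζ : ∀ t ∉ S, nZero (hA.sub_ofReal_smul hB t) = 0 := fun t ht => by
    have := nZero_le_rootMultiplicity hA hB hreg t
    rwa [← count_roots, Multiset.count_eq_zero.2 (by simpa [S] using ht), Nat.le_zero] at this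
  have h₀ : nNeg (hA.sub_ofReal_smul hB 0) = nNeg hA := by simp
  obtain ⟨ε, hε, hε₀⟩ :
      ∃ ε > 0, nNeg (hA.sub_ofReal_smul hB 0) ≤ nNeg (hA.sub_ofReal_smul hB ε) :=
    ((eventually_nNeg_le_nNeg_add_nZero hA hB 0).filter_mono nhdsWithin_le_nhds |>.and
      (self_mem_nhdsWithin (s := Set.Ioi 0))).exists.imp fun ε h => ⟨h.2, h.1.1⟩
  obtain ⟨T, hεT, hT⟩ := ((eventually_ge_atTop ε).and (eventually_nNeg_le_nPos hA hB)).exists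
  have hjumps := le_add_sum_of_eventually S hζ (eventually_nNeg_le_nNeg_add_nZero hA hB) hεT
  have hroots := (Finset.sum_le_sum fun t _ => nZero_le_rootMultiplicity hA hB hreg t).trans
    (sum_rootMultiplicity_le_pencilPosCount A B (S.filter (· ∈ Set.Ioc ε T))
      fun t ht => hε.trans (Finset.mem_filter.1 ht).2.1)
  have hsplit := nNeg_add_nPos_add_nZero (hA.sub_ofReal_smul hB T)
  omega
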